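/- arXiv:1106.4325 — 3 statements merged into one kernel-verified Lean document; each statement's English description precedes it below -/
import Mathlib

section
/- In model M, the expected number of white balls after n draws is E(W_n) = (W_0/T_0)·(n·m·c + T_0) for every n ≥ 0. -/
open Finset

/-- Total number of balls after `n` draws: `T_n = W_0 + B_0 + n·m·c`. -/
def urnT (W0 B0 m c n : ℕ) : ℕ := W0 + B0 + n * m * c

/-- Probability mass function of the number of white balls after `n` draws in the
Chen–Wei model `M` (at each step `m` balls are drawn without replacement and, for
each drawn ball, `c` balls of the same color are added). -/
noncomputable def massM (W0 B0 m c : ℕ) : ℕ → ℕ → ℝ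
  | 0 => fun v => if v = W0 then 1 else 0
  | n + 1 => fun v =>
      ∑ w ∈ Finset.range (urnT W0 B0 m c n + 1), ∑ k ∈ Finset.range (m + 1),
        if v = w + c * k then
          massM W0 B0 m c n w *
            ((Nat.choose w k * Nat.choose (urnT W0 B0 m c n - w) (m - k) : ℝ) /
              (Nat.choose (urnT W0 B0 m c n) m : ℝ))
        else 0

/-- The `s`-th moment `E(W_n^s)` of the number of white balls in model `M`. -/
noncomputable def momM (W0 B0 m c s n : ℕ) : ℝ :=
  ∑ w ∈ Finset.range (urnT W0 B0 m c n + 1), massM W0 B0 m c n w * (w : ℝ) ^ s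

/-! The fraction of white balls is a martingale. Given `w` white balls among `T`, the number
of white balls drawn is hypergeometric with mean `m·w/T`, so the expected number of white
balls after the step is `w + c·m·w/T = w·(T + m·c)/T`. Hence `E(W_n)/T_n` does not depend on
`n` and equals `W_0/T_0`. -/

namespace Nat

theorem sum_range_choose_mul_choose (a b m : ℕ) :
    ∑ k ∈ range (m + 1), a.choose k * b.choose (m - k) = (a + b).choose m := by
  rw [add_choose_eq, Finset.Nat.sum_antidiagonal_eq_sum_range_succ_mk]

-- Absorbing the factor `k` reduces the sum to Vandermonde's identity for `a - 1`, `b`, `m - 1`.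
theorem sum_range_mul_choose_mul_choose (a b m : ℕ) :
    (a + b) * ∑ k ∈ range (m + 1), k * (a.choose k * b.choose (m - k)) =
      m * a * (a + b).choose m := by
  rcases m with _ | m
  · simp
  rcases a with _ | a
  · rw [Finset.sum_eq_zero fun k _ => by rcases k with _ | k <;> simp]
    simp
  have absorb : ∀ j, (j + 1) * ((a + 1).choose (j + 1) * b.choose (m + 1 - (j + 1))) =
      (a + 1) * (a.choose j * b.choose (m - j)) := by
    intro j
    rw [Nat.add_sub_add_right, ← mul_assoc, mul_comm (j + 1), ← add_one_mul_choose_eq]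
    ring
  rw [sum_range_succ', Finset.sum_congr rfl fun j _ => absorb j, ← mul_sum,
    sum_range_choose_mul_choose]
  have absorb_total := add_one_mul_choose_eq (a + b) m
  simp only [zero_mul, add_zero]
  rw [show a + 1 + b = a + b + 1 by ring]
  linear_combination (a + 1) * absorb_total

end Nat

noncomputable def hypergeomWeight (T w m k : ℕ) : ℝ :=
  (Nat.choose w k * Nat.choose (T - w) (m - k) : ℝ) / (Nat.choose T m : ℝ)

section Hypergeometric

variable {T w m : ℕ}

theorem sum_hypergeomWeight (hw : w ≤ T) (hm : m ≤ T) :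
    ∑ k ∈ range (m + 1), hypergeomWeight T w m k = 1 := by
  have hC : (T.choose m : ℝ) ≠ 0 := by exact_mod_cast (Nat.choose_pos hm).ne'
  have vandermonde := Nat.sum_range_choose_mul_choose w (T - w) m
  rw [Nat.add_sub_cancel' hw] at vandermonde
  simp only [hypergeomWeight, ← sum_div, div_eq_one_iff_eq hC]
  exact_mod_cast vandermonde

theorem mul_sum_mul_hypergeomWeight (hw : w ≤ T) (hm : m ≤ T) :
    (T : ℝ) * ∑ k ∈ range (m + 1), (k : ℝ) * hypergeomWeight T w m k = m * w := by
  have hC : (T.choose m : ℝ) ≠ 0 := by exact_mod_cast (Nat.choose_pos hm).ne'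
  have mean := Nat.sum_range_mul_choose_mul_choose w (T - w) m
  rw [Nat.add_sub_cancel' hw] at mean
  simp only [hypergeomWeight, mul_div_assoc', ← sum_div, div_eq_iff hC]
  exact_mod_cast mean

theorem mul_sum_hypergeomWeight_mul_add (c : ℕ) (hw : w ≤ T) (hm : m ≤ T) :
    (T : ℝ) * ∑ k ∈ range (m + 1), hypergeomWeight T w m k * ((w + c * k : ℕ) : ℝ) =
      (T + m * c) * w := by
  have total := sum_hypergeomWeight hw hm
  have mean := mul_sum_mul_hypergeomWeight hw hm
  have split : ∑ k ∈ range (m + 1), hypergeomWeight T w m k * ((w + c * k : ℕ) : ℝ) =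
      w * ∑ k ∈ range (m + 1), hypergeomWeight T w m k +
        c * ∑ k ∈ range (m + 1), (k : ℝ) * hypergeomWeight T w m k := by
    simp only [mul_sum, ← sum_add_distrib]
    refine sum_congr rfl fun k _ => ?_
    push_cast; ring
  rw [split, total]
  linear_combination c * mean

end Hypergeometric

theorem urnT_succ (W0 B0 m c n : ℕ) : urnT W0 B0 m c (n + 1) = urnT W0 B0 m c n + m * c := by
  simp only [urnT]; ring

theorem momM_zero (W0 B0 m c s : ℕ) : momM W0 B0 m c s 0 = (W0 : ℝ) ^ s := by
  simp [momM, massM, urnT]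

section ModelM

variable {W0 B0 m c : ℕ}

theorem sum_massM_succ_mul (f : ℕ → ℝ) (n : ℕ) :
    ∑ v ∈ range (urnT W0 B0 m c (n + 1) + 1), massM W0 B0 m c (n + 1) v * f v =
      ∑ w ∈ range (urnT W0 B0 m c n + 1), massM W0 B0 m c n w *
        ∑ k ∈ range (m + 1), hypergeomWeight (urnT W0 B0 m c n) w m k * f (w + c * k) := by
  simp only [massM, sum_mul, ite_mul, zero_mul, mul_sum]
  rw [sum_comm]
  refine sum_congr rfl fun w hw => ?_
  rw [sum_comm]
  refine sum_congr rfl fun k hk => ?_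
  rw [sum_ite_eq', if_pos]
  · simp only [hypergeomWeight]; ring
  · simp only [mem_range, urnT_succ] at hw hk ⊢
    nlinarith

theorem momM_one_succ_mul (hm : m ≤ W0 + B0) (n : ℕ) :
    momM W0 B0 m c 1 (n + 1) * urnT W0 B0 m c n =
      urnT W0 B0 m c (n + 1) * momM W0 B0 m c 1 n := by
  have hmT : m ≤ urnT W0 B0 m c n := hm.trans (Nat.le_add_right _ _)
  simp only [momM, sum_massM_succ_mul, pow_one]
  rw [sum_mul, mul_sum]
  refine sum_congr rfl fun w hw => ?_
  have hwT : w ≤ urnT W0 B0 m c n := Nat.lt_succ_iff.mp (mem_range.mp hw)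
  have step := mul_sum_hypergeomWeight_mul_add c hwT hmT
  rw [urnT_succ, Nat.cast_add, Nat.cast_mul]
  linear_combination massM W0 B0 m c n w * step

end ModelM

theorem modelM_expectation_general (W0 B0 m c : ℕ)
    (hW0 : 1 ≤ W0) (hT0 : m ≤ W0 + B0) :
    ∀ n : ℕ, momM W0 B0 m c 1 n =
      (W0 : ℝ) / ((W0 : ℝ) + (B0 : ℝ)) * ((n : ℝ) * m * c + ((W0 : ℝ) + (B0 : ℝ))) := by
  have urnT_pos : ∀ n, (0 : ℝ) < urnT W0 B0 m c n := fun n =>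
    Nat.cast_pos.mpr (by unfold urnT; omega)
  have urnT_cast : ∀ n : ℕ, (urnT W0 B0 m c n : ℝ) = n * m * c + (W0 + B0) := fun n => by
    unfold urnT; push_cast; ring
  have fraction : ∀ n, momM W0 B0 m c 1 n / urnT W0 B0 m c n = W0 / (W0 + B0) := by
    intro n
    induction n with
    | zero => rw [momM_zero, pow_one, urnT_cast]; simp
    | succ n ih =>
      rw [← ih, div_eq_div_iff (urnT_pos _).ne' (urnT_pos _).ne', momM_one_succ_mul hT0,
        mul_comm]
  intro n
  rw [← urnT_cast, ← fraction n, div_mul_cancel₀ _ (urnT_pos n).ne']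

/-- In model `M`, the expected number of white balls after `n` draws is
`E(W_n) = (W_0/T_0)·(n·m·c + T_0)`. -/
theorem modelM_expectation (W0 B0 m c : ℕ) (hm : 1 ≤ m) (hc : 1 ≤ c)
    (hW0 : 1 ≤ W0) (hB0 : 1 ≤ B0) (hT0 : m ≤ W0 + B0) :
    ∀ n : ℕ, momM W0 B0 m c 1 n =
      (W0 : ℝ) / ((W0 : ℝ) + (B0 : ℝ)) * ((n : ℝ) * m * c + ((W0 : ℝ) + (B0 : ℝ))) :=
  modelM_expectation_general W0 B0 m c hW0 hT0
end

section
/- For integers T ≥ m ≥ 1, 0 ≤ W ≤ T and ℓ ≥ 1, the ℓ-th moment of the hypergeometric distribution satisfies Σ_{k=1}^{m} k^ℓ · C(W,k)·C(T−W, m−k)/C(T,m) = Σ_{j=1}^{ℓ} S(ℓ,j) · W^{(j)} · C(m,j)/C(T,j), where W^{(j)} := W(W−1)···(W−j+1) is the falling factorial. -/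
/-- Stirling numbers of the second kind `S(n,k)`, characterized by
`x^m = Σ_k S(m,k)·x^{(k)}` with `x^{(k)}` the falling factorial. -/
def stirling2 : ℕ → ℕ → ℕ
  | 0, 0 => 1
  | 0, _ + 1 => 0
  | _ + 1, 0 => 0
  | n + 1, k + 1 => (k + 1) * stirling2 n (k + 1) + stirling2 n k

/-! Expand `k ^ ℓ = ∑ j, S(ℓ, j) · k^{(j)}` and compute each factorial moment separately:
`k^{(j)} · C(W, k) = W^{(j)} · C(W - j, k - j)`, so Vandermonde's identity sums the `j`-th factorial
moment to `W^{(j)} · C(T - j, m - j) / C(T, m)`, which is `W^{(j)} · C(m, j) / C(T, j)` because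
`C(T, m) · C(m, j) = C(T, j) · C(T - j, m - j)`. -/

open Finset

theorem stirling2_eq_stirlingSecond : ∀ n k, stirling2 n k = Nat.stirlingSecond n k
  | 0, 0 | 0, _ + 1 | _ + 1, 0 => rfl
  | n + 1, k + 1 => by
    rw [stirling2, Nat.stirlingSecond_succ_succ, stirling2_eq_stirlingSecond n (k + 1),
      stirling2_eq_stirlingSecond n k]

theorem sum_Icc_one_eq_sum_range_succ {M : Type*} [AddCommMonoid M] {f : ℕ → M} (h0 : f 0 = 0)
    (n : ℕ) : ∑ i ∈ Icc 1 n, f i = ∑ i ∈ range (n + 1), f i := by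
  rw [Nat.range_succ_eq_Icc_zero, ← insert_Icc_add_one_left_eq_Icc n.zero_le,
    sum_insert (by simp), h0, zero_add, zero_add]

namespace Nat

theorem mul_descFactorial (x j : ℕ) :
    x * x.descFactorial j = x.descFactorial (j + 1) + j * x.descFactorial j := by
  rw [descFactorial_succ]
  rcases le_or_gt j x with h | h
  · rw [← Nat.add_mul, Nat.sub_add_cancel h]
  · simp [descFactorial_eq_zero_iff_lt.2 h]

theorem pow_eq_sum_stirlingSecond_mul_descFactorial (x : ℕ) : ∀ n : ℕ,
    x ^ n = ∑ j ∈ range (n + 1), stirlingSecond n j * x.descFactorial j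
  | 0 => by simp
  | n + 1 => by
    set g : ℕ → ℕ := fun j => j * stirlingSecond n j * x.descFactorial j
    -- both sides equal `∑ j ∈ range (n + 2), g j`, as `g 0 = 0` and `S(n, n + 1) = 0`
    have hshift : ∑ j ∈ range (n + 1), g j = ∑ j ∈ range (n + 1), g (j + 1) := by
      have := sum_range_succ' g (n + 1)
      rw [sum_range_succ, show g (n + 1) = 0 by simp [g, stirlingSecond_eq_zero_of_lt]] at this
      simpa [g] using this
    calc x ^ (n + 1)
        = ∑ j ∈ range (n + 1), stirlingSecond n j * (x * x.descFactorial j) := by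
          rw [pow_succ', pow_eq_sum_stirlingSecond_mul_descFactorial x n, mul_sum]
          exact sum_congr rfl fun j _ => by ring
      _ = ∑ j ∈ range (n + 1), (stirlingSecond n j * x.descFactorial (j + 1) + g j) := by
          simp_rw [mul_descFactorial, g]
          exact sum_congr rfl fun j _ => by ring
      _ = ∑ j ∈ range (n + 1), stirlingSecond (n + 1) (j + 1) * x.descFactorial (j + 1) := by
          rw [sum_add_distrib, hshift, ← sum_add_distrib]
          exact sum_congr rfl fun j _ => by simp only [g, stirlingSecond_succ_succ]; ring
      _ = ∑ j ∈ range (n + 2), stirlingSecond (n + 1) j * x.descFactorial j := by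
          simp [sum_range_succ' _ (n + 1)]

theorem descFactorial_mul_choose {W k j : ℕ} (hjk : j ≤ k) :
    k.descFactorial j * W.choose k = W.descFactorial j * (W - j).choose (k - j) := by
  rw [descFactorial_eq_factorial_mul_choose, descFactorial_eq_factorial_mul_choose, Nat.mul_assoc,
    Nat.mul_assoc, Nat.mul_comm (k.choose j), choose_mul hjk]

theorem sum_descFactorial_mul_choose_mul_choose (W N : ℕ) {m j : ℕ} (hjm : j ≤ m) :
    ∑ k ∈ range (m + 1), k.descFactorial j * (W.choose k * N.choose (m - k)) =
      W.descFactorial j * (W + N - j).choose (m - j) := by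
  have hvanish : ∑ k ∈ range j, k.descFactorial j * (W.choose k * N.choose (m - k)) = 0 :=
    sum_eq_zero fun k hk => by simp [descFactorial_eq_zero_iff_lt.2 (mem_range.1 hk)]
  rw [show m + 1 = j + (m - j + 1) by omega, sum_range_add, hvanish, zero_add]
  simp_rw [← Nat.mul_assoc, descFactorial_mul_choose (Nat.le_add_right j _), Nat.mul_assoc,
    ← mul_sum, Nat.add_sub_cancel_left, show ∀ i, m - (j + i) = m - j - i by omega,
    ← Finset.Nat.sum_antidiagonal_eq_sum_range_succ (fun a b => (W - j).choose a * N.choose b),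
    ← add_choose_eq]
  rcases le_or_gt j W with h | h
  · rw [Nat.sub_add_comm h]
  · simp [descFactorial_eq_zero_iff_lt.2 h]

end Nat

open Nat in
theorem hypergeometric_factorial_moment (W N m j : ℕ) (hm : m ≤ W + N) :
    ∑ k ∈ range (m + 1), (k.descFactorial j : ℝ) *
        ((W.choose k : ℝ) * N.choose (m - k)) / ((W + N).choose m : ℝ) =
      W.descFactorial j * m.choose j / (W + N).choose j := by
  rcases le_or_gt j m with hjm | hjm
  · have hsum : ∑ k ∈ range (m + 1),
          (k.descFactorial j : ℝ) * ((W.choose k : ℝ) * N.choose (m - k)) =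
        W.descFactorial j * (W + N - j).choose (m - j) := by
      exact_mod_cast sum_descFactorial_mul_choose_mul_choose W N hjm
    have hchoose : ((W + N).choose m : ℝ) * m.choose j =
        (W + N).choose j * (W + N - j).choose (m - j) := by
      exact_mod_cast choose_mul hjm
    have hm_pos : (0 : ℝ) < (W + N).choose m := mod_cast choose_pos hm
    have hj_pos : (0 : ℝ) < (W + N).choose j := mod_cast choose_pos (hjm.trans hm)
    rw [← sum_div, hsum, div_eq_div_iff hm_pos.ne' hj_pos.ne']
    linear_combination -(W.descFactorial j : ℝ) * hchoose
  · rw [choose_eq_zero_of_lt hjm, cast_zero, mul_zero, zero_div]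
    exact sum_eq_zero fun k hk => by
      simp [descFactorial_eq_zero_iff_lt.2 (lt_of_lt_of_le (mem_range.1 hk) hjm)]

theorem hypergeometric_moment_general (T m W ℓ : ℕ) (hmT : m ≤ T) (hWT : W ≤ T)
    (hℓ : 1 ≤ ℓ) :
    ∑ k ∈ Finset.Icc 1 m, (k : ℝ) ^ ℓ *
        (Nat.choose W k * Nat.choose (T - W) (m - k) : ℝ) / (Nat.choose T m : ℝ) =
      ∑ j ∈ Finset.Icc 1 ℓ, (stirling2 ℓ j : ℝ) * (Nat.descFactorial W j : ℝ) *
        (Nat.choose m j : ℝ) / (Nat.choose T j : ℝ) := by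
  obtain ⟨N, rfl⟩ := Nat.exists_eq_add_of_le hWT
  obtain ⟨n, rfl⟩ := Nat.exists_eq_add_of_le' hℓ
  have hpow (k : ℕ) : (k : ℝ) ^ (n + 1) =
      ∑ j ∈ range (n + 2), (Nat.stirlingSecond (n + 1) j : ℝ) * k.descFactorial j := by
    exact_mod_cast Nat.pow_eq_sum_stirlingSecond_mul_descFactorial k (n + 1)
  rw [Nat.add_sub_cancel_left, sum_Icc_one_eq_sum_range_succ (by simp),
    sum_Icc_one_eq_sum_range_succ (by simp [stirling2])]
  simp_rw [stirling2_eq_stirlingSecond]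
  calc _ = ∑ k ∈ range (m + 1), ∑ j ∈ range (n + 2), (Nat.stirlingSecond (n + 1) j : ℝ) *
          ((k.descFactorial j : ℝ) * ((W.choose k : ℝ) * N.choose (m - k)) / (W + N).choose m) := by
        refine sum_congr rfl fun k _ => ?_
        rw [hpow, sum_mul, sum_div]
        exact sum_congr rfl fun j _ => by ring
    _ = _ := by
        rw [sum_comm]
        refine sum_congr rfl fun j _ => ?_
        rw [← mul_sum, hypergeometric_factorial_moment W N m j hmT]
        ring

/-- The `ℓ`-th moment of the hypergeometric distribution:
`Σ_{k=1}^{m} k^ℓ·C(W,k)·C(T−W,m−k)/C(T,m) = Σ_{j=1}^{ℓ} S(ℓ,j)·W^{(j)}·C(m,j)/C(T,j)`. -/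
theorem hypergeometric_moment (T m W ℓ : ℕ) (hm : 1 ≤ m) (hmT : m ≤ T) (hWT : W ≤ T)
    (hℓ : 1 ≤ ℓ) :
    ∑ k ∈ Finset.Icc 1 m, (k : ℝ) ^ ℓ *
        (Nat.choose W k * Nat.choose (T - W) (m - k) : ℝ) / (Nat.choose T m : ℝ) =
      ∑ j ∈ Finset.Icc 1 ℓ, (stirling2 ℓ j : ℝ) * (Nat.descFactorial W j : ℝ) *
        (Nat.choose m j : ℝ) / (Nat.choose T j : ℝ) :=
  hypergeometric_moment_general T m W ℓ hmT hWT hℓ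
end

section
/- Fix integers m ≥ 1, c ≥ 1, T_0 ≥ 1 and s ≥ 1. The function p(x) := (s!/(mc)^s) · Σ_{ℓ=0}^{s} c^ℓ·C(m,ℓ)·C(x·mc + T_0 − ℓ, s−ℓ) (where C(y, r) := y(y−1)···(y−r+1)/r! is a polynomial in y) is a monic polynomial of degree s in x, and its coefficient of x^{s−1}, i.e. the sum Σ_{ℓ=1}^{s} λ_{ℓ,s} of the negatives of its roots, equals (s·T_0 − C(s,2))/(mc) + s. -/
open Polynomial

/-!
The `ℓ`-th summand of `p` has degree at most `s - ℓ`, so only `ℓ = 0` reaches `x^s` and only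
`ℓ = 0, 1` reach `x^(s-1)`. The `ℓ = 0` summand is, up to `1/s!`, a product of `s` linear factors
`mc·x + (T₀ - i)`: its top coefficient is `(mc)^s` and, by Vieta, its next one is
`(mc)^(s-1)·Σ_{i<s} (T₀ - i) = (mc)^(s-1)·(s·T₀ - C(s,2))`. The `ℓ = 1` summand contributes
`cm·(mc)^(s-1)/(s-1)!`, which after the normalisation `s!/(mc)^s` is the extra `s`.
-/

/-- The polynomial `p(x) = (s!/(mc)^s)·Σ_{ℓ=0}^{s} c^ℓ·C(m,ℓ)·C(x·mc + T₀ − ℓ, s−ℓ)`,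
where `C(y,r) = y(y−1)⋯(y−r+1)/r!` is read as a polynomial in `y`. -/
noncomputable def lambdaPoly (m c T0 s : ℕ) : Polynomial ℝ :=
  Polynomial.C ((Nat.factorial s : ℝ) / ((m : ℝ) * c) ^ s) *
    ∑ ℓ ∈ Finset.range (s + 1),
      Polynomial.C ((c : ℝ) ^ ℓ * (Nat.choose m ℓ : ℝ) / (Nat.factorial (s - ℓ) : ℝ)) *
        ∏ i ∈ Finset.range (s - ℓ),
          (Polynomial.C ((m : ℝ) * c) * Polynomial.X +
            Polynomial.C ((T0 : ℝ) - (ℓ : ℝ) - (i : ℝ)))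

namespace Polynomial

section LinearProduct

variable {R : Type*} [CommSemiring R] (a : R) (b : ℕ → R)

theorem natDegree_prod_range_C_mul_X_add_C_le (r : ℕ) :
    (∏ i ∈ Finset.range r, (C a * X + C (b i))).natDegree ≤ r :=
  (natDegree_prod_le _ _).trans <| by
    simpa using Finset.sum_le_sum fun i (_ : i ∈ Finset.range r) =>
      natDegree_linear_le (a := a) (b := b i)

theorem coeff_mul_C_mul_X_add_C (p : R[X]) (k : ℕ) (c d : R) :
    (p * (C c * X + C d)).coeff (k + 1) = c * p.coeff k + d * p.coeff (k + 1) := by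
  rw [show p * (C c * X + C d) = C c * (p * X) + C d * p by ring, coeff_add, coeff_C_mul,
    coeff_C_mul, coeff_mul_X]

theorem coeff_prod_range_C_mul_X_add_C_self (r : ℕ) :
    (∏ i ∈ Finset.range r, (C a * X + C (b i))).coeff r = a ^ r := by
  induction r with
  | zero => simp
  | succ r ih =>
    rw [Finset.prod_range_succ, coeff_mul_C_mul_X_add_C, ih, coeff_eq_zero_of_natDegree_lt
      ((natDegree_prod_range_C_mul_X_add_C_le a b r).trans_lt r.lt_succ_self)]
    ring

theorem coeff_prod_range_succ_C_mul_X_add_C (r : ℕ) :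
    (∏ i ∈ Finset.range (r + 1), (C a * X + C (b i))).coeff r =
      a ^ r * ∑ i ∈ Finset.range (r + 1), b i := by
  induction r with
  | zero => simp
  | succ r ih =>
    rw [Finset.prod_range_succ, coeff_mul_C_mul_X_add_C, ih, coeff_prod_range_C_mul_X_add_C_self,
      Finset.sum_range_succ _ (r + 1)]
    ring

end LinearProduct

theorem finsetSum_range_coeff_of_natDegree_le_sub {R : Type*} [Semiring R] {N n : ℕ}
    (f : ℕ → R[X]) (hf : ∀ ℓ, (f ℓ).natDegree ≤ N - ℓ) (hn : n ≤ N) :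
    (∑ ℓ ∈ Finset.range (N + 1), f ℓ).coeff n = ∑ ℓ ∈ Finset.range (N - n + 1), (f ℓ).coeff n := by
  rw [finsetSum_coeff]
  refine (Finset.sum_subset (Finset.range_subset_range.mpr (by omega)) fun ℓ hℓN hℓ => ?_).symm
  rw [Finset.mem_range] at hℓN hℓ
  exact coeff_eq_zero_of_natDegree_lt ((hf ℓ).trans_lt (by omega))

end Polynomial

theorem Finset.sum_range_natCast_eq_choose_two {R : Type*} [CommSemiring R] (n : ℕ) :
    ∑ i ∈ Finset.range n, (i : R) = (n.choose 2 : ℕ) := by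
  rw [← Nat.cast_sum, Finset.sum_range_id, Nat.choose_two_right]

section LambdaPoly

noncomputable def lambdaPolyTerm (m c T0 s ℓ : ℕ) : ℝ[X] :=
  C ((c : ℝ) ^ ℓ * (Nat.choose m ℓ : ℝ) / (Nat.factorial (s - ℓ) : ℝ)) *
    ∏ i ∈ Finset.range (s - ℓ), (C ((m : ℝ) * c) * X + C ((T0 : ℝ) - (ℓ : ℝ) - (i : ℝ)))

variable (m c T0 s : ℕ)

theorem lambdaPoly_eq_sum_lambdaPolyTerm :
    lambdaPoly m c T0 s = C ((s.factorial : ℝ) / ((m : ℝ) * c) ^ s) *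
      ∑ ℓ ∈ Finset.range (s + 1), lambdaPolyTerm m c T0 s ℓ :=
  rfl

theorem natDegree_lambdaPolyTerm_le (ℓ : ℕ) : (lambdaPolyTerm m c T0 s ℓ).natDegree ≤ s - ℓ :=
  natDegree_C_mul_le _ _ |>.trans (natDegree_prod_range_C_mul_X_add_C_le _ _ _)

theorem natDegree_lambdaPoly_le : (lambdaPoly m c T0 s).natDegree ≤ s :=
  natDegree_C_mul_le _ _ |>.trans <| natDegree_sum_le_of_forall_le _ _ fun ℓ _ =>
    (natDegree_lambdaPolyTerm_le m c T0 s ℓ).trans (Nat.sub_le s ℓ)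

theorem coeff_lambdaPoly {n : ℕ} (hn : n ≤ s) :
    (lambdaPoly m c T0 s).coeff n = (s.factorial : ℝ) / ((m : ℝ) * c) ^ s *
      ∑ ℓ ∈ Finset.range (s - n + 1), (lambdaPolyTerm m c T0 s ℓ).coeff n := by
  rw [lambdaPoly_eq_sum_lambdaPolyTerm, coeff_C_mul,
    finsetSum_range_coeff_of_natDegree_le_sub _ (natDegree_lambdaPolyTerm_le m c T0 s) hn]

variable {m c}

theorem coeff_lambdaPoly_self (hm : 1 ≤ m) (hc : 1 ≤ c) : (lambdaPoly m c T0 s).coeff s = 1 := by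
  rw [coeff_lambdaPoly m c T0 s le_rfl, Nat.sub_self, Finset.sum_range_one, lambdaPolyTerm,
    coeff_C_mul, Nat.sub_zero, coeff_prod_range_C_mul_X_add_C_self]
  have : (m : ℝ) * c ≠ 0 := by positivity
  field_simp
  simp

theorem coeff_lambdaPoly_pred (hm : 1 ≤ m) (hc : 1 ≤ c) (t : ℕ) :
    (lambdaPoly m c T0 (t + 1)).coeff t =
      ((t + 1 : ℝ) * T0 - ((t + 1).choose 2 : ℕ)) / ((m : ℝ) * c) + (t + 1) := by
  rw [coeff_lambdaPoly m c T0 (t + 1) t.le_succ, show t + 1 - t + 1 = 2 by omega,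
    Finset.sum_range_succ, Finset.sum_range_one, lambdaPolyTerm, lambdaPolyTerm, coeff_C_mul,
    coeff_C_mul, Nat.sub_zero, Nat.add_sub_cancel, coeff_prod_range_succ_C_mul_X_add_C,
    coeff_prod_range_C_mul_X_add_C_self, Finset.sum_sub_distrib, Finset.sum_sub_distrib,
    Finset.sum_range_natCast_eq_choose_two]
  have : (m : ℝ) * c ≠ 0 := by positivity
  field_simp
  simp only [Nat.choose_zero_right, Nat.choose_one_right, Nat.factorial_succ, Finset.sum_const,
    Finset.card_range, nsmul_eq_mul]
  push_cast
  ring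

end LambdaPoly

theorem lambdaPoly_monic_and_rootSum_general (m c T0 s : ℕ) (hm : 1 ≤ m) (hc : 1 ≤ c)
    (hs : 1 ≤ s) :
    (lambdaPoly m c T0 s).Monic ∧ (lambdaPoly m c T0 s).natDegree = s ∧
      (lambdaPoly m c T0 s).coeff (s - 1) =
        ((s : ℝ) * T0 - (Nat.choose s 2 : ℝ)) / ((m : ℝ) * c) + s := by
  have hcoeff := coeff_lambdaPoly_self T0 s hm hc
  refine ⟨monic_of_natDegree_le_of_coeff_eq_one s (natDegree_lambdaPoly_le m c T0 s) hcoeff,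
    natDegree_eq_of_le_of_coeff_ne_zero (natDegree_lambdaPoly_le m c T0 s) (hcoeff ▸ one_ne_zero), ?_⟩
  obtain ⟨t, rfl⟩ := Nat.exists_eq_add_of_le' hs
  simpa using coeff_lambdaPoly_pred T0 hm hc t

/-- `p` is a monic polynomial of degree `s` in `x`, and its coefficient of `x^{s−1}`
(i.e. the sum `Σ_{ℓ=1}^{s} λ_{ℓ,s}` of the negatives of its roots) equals
`(s·T₀ − C(s,2))/(mc) + s`. -/
theorem lambdaPoly_monic_and_rootSum (m c T0 s : ℕ) (hm : 1 ≤ m) (hc : 1 ≤ c)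
    (hT0 : 1 ≤ T0) (hs : 1 ≤ s) :
    (lambdaPoly m c T0 s).Monic ∧ (lambdaPoly m c T0 s).natDegree = s ∧
      (lambdaPoly m c T0 s).coeff (s - 1) =
        ((s : ℝ) * T0 - (Nat.choose s 2 : ℝ)) / ((m : ℝ) * c) + s :=
  lambdaPoly_monic_and_rootSum_general m c T0 s hm hc hs
end
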